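/- Suppose g_{n,k} > 0 and δ_n² > 0 for all n, k, let γ* be the optimal value of the uplink sum-power problem (P_sum^UL), and call an association a optimal if the supremum of min_k SINR^UL_k(p,a) over all p ≥ 0 with Σ_k p_k ≤ p̄_sum equals γ*. Let p(t) be generated by the ULSum iteration p(t+1) = p̄_sum · T(p(t)) / (Σ_{k=1}^K T_k(p(t))) from a strictly positive p(0), and let a(t) be any sequence of associations with a_k(t) ∈ argmin_{1≤n≤N} T_k^{(n)}(p(t)) for every k. Then there exists T₀ such that a(t) is an optimal association for all t ≥ T₀. -/

import Mathlib

open Finset Filter Real Topology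

/-- Uplink SINR of user `k` under power vector `p` and BS association `a`. -/
noncomputable def SINRul {N K : ℕ} (g : Fin N → Fin K → ℝ) (δsq : Fin N → ℝ)
    (p : Fin K → ℝ) (a : Fin K → Fin N) (k : Fin K) : ℝ :=
  g (a k) k * p k / (δsq (a k) + ∑ j ∈ Finset.univ.erase k, g (a k) j * p j)

/-- Minimum power needed by user `k` to achieve SINR 1 when associated with BS `n`. -/
noncomputable def Tkn {N K : ℕ} (g : Fin N → Fin K → ℝ) (δsq : Fin N → ℝ)
    (n : Fin N) (k : Fin K) (p : Fin K → ℝ) : ℝ :=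
  (δsq n + ∑ j ∈ Finset.univ.erase k, g n j * p j) / g n k

/-- Minimum power needed by user `k` to achieve SINR 1, over all BS choices. -/
noncomputable def Tk {N K : ℕ} (g : Fin N → Fin K → ℝ) (δsq : Fin N → ℝ)
    (k : Fin K) (p : Fin K → ℝ) : ℝ :=
  ⨅ n, Tkn g δsq n k p

/-- Optimal value of the uplink sum-power problem (P_sum^UL). -/
noncomputable def valULsum {N K : ℕ} (g : Fin N → Fin K → ℝ) (δsq : Fin N → ℝ)
    (S : ℝ) : ℝ :=
  sSup {γ | ∃ (p : Fin K → ℝ) (a : Fin K → Fin N),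
    (∀ k, 0 ≤ p k) ∧ (∑ k, p k ≤ S) ∧ γ = ⨅ k, SINRul g δsq p a k}

/-- An association `a` is optimal for (P_sum^UL) if the best min-SINR achievable with
association `a` equals the optimal value of the problem. -/
noncomputable def IsOptimalAssoc {N K : ℕ} (g : Fin N → Fin K → ℝ) (δsq : Fin N → ℝ)
    (S : ℝ) (a : Fin K → Fin N) : Prop :=
  sSup {γ | ∃ p : Fin K → ℝ,
      (∀ k, 0 ≤ p k) ∧ (∑ k, p k ≤ S) ∧ γ = ⨅ k, SINRul g δsq p a k}
    = valULsum g δsq S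

/-! ### Auxiliary scalar inequalities -/

private theorem bern' {c m : ℝ} (hc0 : 0 ≤ c) (hc1 : c ≤ 1) (hm : 0 ≤ m) :
    m ^ c ≤ 1 + c * (m - 1) := by
  have := Real.geom_mean_le_arith_mean2_weighted hc0 (by linarith : (0:ℝ) ≤ 1 - c)
    hm zero_le_one (by ring)
  rw [Real.one_rpow] at this; linarith

private theorem chord' {r B M : ℝ} (hr0 : 0 ≤ r) (hr1 : r < 1) (hB : 1 < B)
    (hM1 : 1 ≤ M) (hMB : M ≤ B) :
    1 + r * (M - 1) ≤ M ^ (Real.logb B (1 + r * (B - 1))) := by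
  set c := Real.logb B (1 + r * (B - 1)) with hc
  have hy1 : (1:ℝ) ≤ 1 + r * (B - 1) := by nlinarith
  have hyB : 1 + r * (B - 1) ≤ B := by nlinarith
  have hc0 : 0 ≤ c := Real.logb_nonneg hB hy1
  have hc1 : c ≤ 1 := by
    have := Real.logb_le_logb_of_le hB (by linarith : (0:ℝ) < 1 + r * (B-1)) hyB
    simpa [Real.logb_self_eq_one hB] using this
  have hBc : B ^ c = 1 + r * (B - 1) :=
    Real.rpow_logb (by linarith) (by linarith) (by linarith)
  have hconc := (Real.concaveOn_rpow hc0 hc1).2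
  set l := (M - 1) / (B - 1) with hl
  have hB1 : (0:ℝ) < B - 1 := by linarith
  have hl0 : 0 ≤ l := by rw [hl]; exact div_nonneg (by linarith) (by linarith)
  have key := hconc (Set.mem_Ici.mpr zero_le_one) (Set.mem_Ici.mpr (by linarith : (0:ℝ) ≤ B))
    (by rw [hl]; rw [sub_nonneg, div_le_one hB1]; linarith : (0:ℝ) ≤ 1 - l) hl0 (by ring)
  have hM : (1 - l) • (1:ℝ) + l • B = M := by
    rw [smul_eq_mul, smul_eq_mul, hl]; field_simp; ring
  rw [smul_eq_mul, smul_eq_mul, hM] at key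
  simp only [smul_eq_mul, Real.one_rpow, hBc] at key
  calc 1 + r * (M - 1) = (1 - l) * 1 + l * (1 + r * (B-1)) := by
        rw [hl]; field_simp; ring
    _ ≤ M ^ c := key

/-! ### Basic facts about `Tkn` and `Tk` -/

section TkFacts

variable {N K : ℕ} {g : Fin N → Fin K → ℝ} {δsq : Fin N → ℝ} {p q : Fin K → ℝ}
  {n : Fin N} {k : Fin K}

private theorem Tkn_pos' (hg : ∀ n k, 0 < g n k) (hδ : ∀ n, 0 < δsq n) (hp : ∀ j, 0 ≤ p j) :
    0 < Tkn g δsq n k p :=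
  div_pos (add_pos_of_pos_of_nonneg (hδ n)
    (Finset.sum_nonneg fun j _ => mul_nonneg (hg n j).le (hp j))) (hg n k)

private theorem Tk_le_Tkn' [Nonempty (Fin N)] : Tk g δsq k p ≤ Tkn g δsq n k p :=
  ciInf_le (Set.finite_range _).bddBelow n

private theorem le_Tk' {c : ℝ} [Nonempty (Fin N)] (h : ∀ n, c ≤ Tkn g δsq n k p) :
    c ≤ Tk g δsq k p := le_ciInf h

private theorem exists_Tk_eq' [Nonempty (Fin N)] : ∃ n, Tk g δsq k p = Tkn g δsq n k p := by
  obtain ⟨n, hn⟩ := Finite.exists_min (fun n => Tkn g δsq n k p)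
  exact ⟨n, le_antisymm Tk_le_Tkn' (le_Tk' hn)⟩

private theorem Tk_pos' [Nonempty (Fin N)] (hg : ∀ n k, 0 < g n k) (hδ : ∀ n, 0 < δsq n)
    (hp : ∀ j, 0 ≤ p j) : 0 < Tk g δsq k p := by
  obtain ⟨n, hn⟩ := exists_Tk_eq' (g := g) (δsq := δsq) (k := k) (p := p)
  rw [hn]; exact Tkn_pos' hg hδ hp

private theorem Tkn_mono' (hg : ∀ n k, 0 < g n k) (hpq : ∀ j, p j ≤ q j) :
    Tkn g δsq n k p ≤ Tkn g δsq n k q := by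
  unfold Tkn
  rw [div_le_div_iff_of_pos_right (hg n k)]
  exact add_le_add_right (Finset.sum_le_sum fun j _ =>
    mul_le_mul_of_nonneg_left (hpq j) (hg n j).le) _

private theorem Tk_mono' [Nonempty (Fin N)] (hg : ∀ n k, 0 < g n k) (hpq : ∀ j, p j ≤ q j) :
    Tk g δsq k p ≤ Tk g δsq k q := by
  obtain ⟨n, hn⟩ := exists_Tk_eq' (g := g) (δsq := δsq) (k := k) (p := q)
  rw [hn]; exact le_trans Tk_le_Tkn' (Tkn_mono' hg hpq)

private theorem Tkn_smul_le' {μ : ℝ} (hg : ∀ n k, 0 < g n k) (hδ : ∀ n, 0 < δsq n) (hμ : 1 ≤ μ) :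
    Tkn g δsq n k (fun j => μ * p j) ≤ μ * Tkn g δsq n k p := by
  unfold Tkn
  rw [mul_div_assoc']
  rw [div_le_div_iff_of_pos_right (hg n k)]
  have : ∑ j ∈ Finset.univ.erase k, g n j * (μ * p j)
      = μ * ∑ j ∈ Finset.univ.erase k, g n j * p j := by
    rw [Finset.mul_sum]; exact Finset.sum_congr rfl fun j _ => by ring
  rw [this]
  nlinarith [hδ n]

private theorem Tk_smul_le' {μ : ℝ} [Nonempty (Fin N)] (hg : ∀ n k, 0 < g n k)
    (hδ : ∀ n, 0 < δsq n) (hμ : 1 ≤ μ) :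
    Tk g δsq k (fun j => μ * p j) ≤ μ * Tk g δsq k p := by
  obtain ⟨n, hn⟩ := exists_Tk_eq' (g := g) (δsq := δsq) (k := k) (p := p)
  rw [hn]; exact le_trans Tk_le_Tkn' (Tkn_smul_le' hg hδ hμ)

private theorem tendsto_inf'' {ι : Type*} (s : Finset ι) (hs : s.Nonempty)
    {f : ι → ℕ → ℝ} {b : ι → ℝ} (h : ∀ i, Tendsto (f i) atTop (𝓝 (b i))) :
    Tendsto (fun t => s.inf' hs (fun i => f i t)) atTop (𝓝 (s.inf' hs b)) := by
  induction s using Finset.cons_induction with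
  | empty => exact absurd hs (by simp)
  | cons a s ha ih =>
    rcases s.eq_empty_or_nonempty with rfl | hs'
    · simpa using h a
    · have e : ∀ gg : ι → ℝ, (Finset.cons a s ha).inf' hs gg = gg a ⊓ s.inf' hs' gg :=
        fun gg => Finset.inf'_cons hs' gg
      simp only [e]
      exact (h a).min (ih hs')

private theorem tendsto_Tk' {pt : ℕ → Fin K → ℝ} {pl : Fin K → ℝ} [Nonempty (Fin N)]
    (h : ∀ n, Tendsto (fun t => Tkn g δsq n k (pt t)) atTop (𝓝 (Tkn g δsq n k pl))) :
    Tendsto (fun t => Tk g δsq k (pt t)) atTop (𝓝 (Tk g δsq k pl)) := by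
  have e1 : ∀ pp, Tk g δsq k pp = Finset.univ.inf' Finset.univ_nonempty
      (fun n => Tkn g δsq n k pp) := fun pp => (Finset.inf'_univ_eq_ciInf _).symm
  simp only [e1]
  exact tendsto_inf'' _ _ h

private theorem SINRul_eq_div_Tkn {a : Fin K → Fin N} :
    SINRul g δsq p a k = p k / Tkn g δsq (a k) k p := by
  unfold SINRul Tkn
  rw [div_div_eq_mul_div, mul_comm]

end TkFacts
private theorem keyM' {rb B c₀ d x M : ℝ} (hr0 : 0 ≤ rb) (hr1 : rb < 1) (hB1 : 1 < B)
    (hc : c₀ = Real.logb B (1 + rb * (B - 1))) (hxr : x ≤ rb * (d + x))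
    (hdx : 0 < d + x) (hM1 : 1 ≤ M) (hMB : M ≤ B) :
    d + M * x ≤ M ^ c₀ * (d + x) := by
  subst hc
  have hch := chord' hr0 hr1 hB1 hM1 hMB
  nlinarith [mul_le_mul_of_nonneg_left hch hdx.le,
    mul_le_mul_of_nonneg_left hxr (by linarith : (0:ℝ) ≤ M - 1)]

private theorem keym' {c₀ d x m : ℝ} (hc00 : 0 ≤ c₀) (hc01 : c₀ ≤ 1)
    (hxc : x ≤ c₀ * (d + x)) (hdx : 0 < d + x) (hm0 : 0 < m) (hm1 : m ≤ 1) :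
    m ^ c₀ * (d + x) ≤ d + m * x := by
  have hb := bern' hc00 hc01 hm0.le
  have h1 : (m - 1) * (c₀ * (d + x)) ≤ (m - 1) * x :=
    mul_le_mul_of_nonpos_left hxc (by linarith)
  nlinarith [mul_le_mul_of_nonneg_right hb hdx.le]
set_option maxHeartbeats 4000000 in
/-- Along the ULSum iteration, the greedy associations
`a_k(t) ∈ argmin_n T_k^{(n)}(p(t))` are eventually optimal for (P_sum^UL). -/
theorem ULSum_association_eventually_optimal (N K : ℕ) (hN : 0 < N) (hK : 0 < K)
    (g : Fin N → Fin K → ℝ) (hg : ∀ n k, 0 < g n k)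
    (δsq : Fin N → ℝ) (hδ : ∀ n, 0 < δsq n)
    (pbar : Fin N → ℝ) (hpbar : ∀ n, 0 < pbar n)
    (p : ℕ → Fin K → ℝ)
    (hp0 : ∀ k, 0 < p 0 k)
    (hiter : ∀ t, p (t + 1) =
      fun k => (∑ n, pbar n) * Tk g δsq k (p t) / ∑ j, Tk g δsq j (p t))
    (a : ℕ → Fin K → Fin N)
    (ha : ∀ t k n, Tkn g δsq (a t k) k (p t) ≤ Tkn g δsq n k (p t)) :
    ∃ T₀ : ℕ, ∀ t, T₀ ≤ t →
      IsOptimalAssoc g δsq (∑ n, pbar n) (a t) := by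
  haveI : Nonempty (Fin N) := Fin.pos_iff_nonempty.mp hN
  haveI : Nonempty (Fin K) := Fin.pos_iff_nonempty.mp hK
  set S : ℝ := ∑ n, pbar n with hSdef
  have hS : 0 < S := Finset.sum_pos (fun n _ => hpbar n) Finset.univ_nonempty
  -- extremal constants
  obtain ⟨qM, hqM⟩ := Finite.exists_max (fun q : Fin N × Fin K => g q.1 q.2)
  obtain ⟨qm, hqm⟩ := Finite.exists_min (fun q : Fin N × Fin K => g q.1 q.2)
  obtain ⟨nM, hnM⟩ := Finite.exists_max δsq
  obtain ⟨nm, hnm⟩ := Finite.exists_min δsq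
  set Gmax := g qM.1 qM.2 with hGdef
  set gmin := g qm.1 qm.2 with hgdef
  set δmax := δsq nM with hdMdef
  set δmin := δsq nm with hdmdef
  have hGmax : ∀ n k, g n k ≤ Gmax := fun n k => hqM (n, k)
  have hgmin : ∀ n k, gmin ≤ g n k := fun n k => hqm (n, k)
  have hδmax : ∀ n, δsq n ≤ δmax := hnM
  have hδmin : ∀ n, δmin ≤ δsq n := hnm
  have hGmax0 : 0 < Gmax := hg _ _
  have hgmin0 : 0 < gmin := hg _ _
  have hδmax0 : 0 < δmax := hδ _
  have hδmin0 : 0 < δmin := hδ _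
  set X : ℝ := Gmax * S with hXdef
  have hX0 : 0 < X := mul_pos hGmax0 hS
  set rb : ℝ := X / (δmin + X) with hrdef
  have hr0 : 0 ≤ rb := div_nonneg hX0.le (by linarith)
  have hr1 : rb < 1 := (div_lt_one (by linarith)).mpr (by linarith)
  set τ : ℝ := δmin / Gmax with hτdef
  have hτ0 : 0 < τ := div_pos hδmin0 hGmax0
  set Θ : ℝ := (δmax + X) / gmin with hΘdef
  have hΘ0 : 0 < Θ := div_pos (by linarith) hgmin0
  set ε : ℝ := min (S * τ / (K * Θ)) (S / 2) with hεdef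
  have hK0 : (0:ℝ) < K := by exact_mod_cast hK
  have hε0 : 0 < ε := lt_min (by positivity) (by positivity)
  have hεS2 : ε ≤ S / 2 := min_le_right _ _
  set B : ℝ := S / ε with hBdef
  have hB2 : 2 ≤ B := by rw [hBdef, le_div_iff₀ hε0]; linarith
  have hB1 : 1 < B := by linarith
  set c₀ : ℝ := Real.logb B (1 + rb * (B - 1)) with hcdef
  have hy1 : (1:ℝ) ≤ 1 + rb * (B - 1) := by nlinarith
  have hyB : 1 + rb * (B - 1) < B := by nlinarith
  have hc00 : 0 ≤ c₀ := Real.logb_nonneg hB1 hy1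
  have hc01 : c₀ < 1 := by
    have h2 := Real.logb_lt_logb hB1 (by linarith : (0:ℝ) < 1 + rb * (B - 1)) hyB
    rwa [Real.logb_self_eq_one hB1] at h2
  have hBc : B ^ c₀ = 1 + rb * (B - 1) :=
    Real.rpow_logb (by linarith) (by linarith) (by linarith)
  have hrc : rb ≤ c₀ := by
    have hb := bern' hc00 hc01.le (by linarith : (0:ℝ) ≤ B)
    rw [hBc] at hb
    nlinarith
  -- interference bounds
  have hI0 : ∀ (v : Fin K → ℝ), (∀ j, 0 ≤ v j) → ∀ nn kk,
      0 ≤ ∑ j ∈ Finset.univ.erase kk, g nn j * v j :=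
    fun v hv nn kk => Finset.sum_nonneg fun j _ => mul_nonneg (hg nn j).le (hv j)
  have hIb : ∀ (v : Fin K → ℝ), (∀ j, 0 ≤ v j) → (∑ j, v j ≤ S) → ∀ nn kk,
      (∑ j ∈ Finset.univ.erase kk, g nn j * v j) ≤ X := by
    intro v hv hvS nn kk
    calc ∑ j ∈ Finset.univ.erase kk, g nn j * v j
        ≤ ∑ j ∈ Finset.univ.erase kk, Gmax * v j :=
          Finset.sum_le_sum fun j _ => mul_le_mul_of_nonneg_right (hGmax nn j) (hv j)
      _ ≤ ∑ j, Gmax * v j := Finset.sum_le_sum_of_subset_of_nonneg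
          (Finset.subset_univ _) (fun j _ _ => mul_nonneg hGmax0.le (hv j))
      _ = Gmax * ∑ j, v j := (Finset.mul_sum _ _ _).symm
      _ ≤ X := by rw [hXdef]; exact mul_le_mul_of_nonneg_left hvS hGmax0.le
  -- the two key scalar inequalities
  have hxrb : ∀ (d x : ℝ), δmin ≤ d → 0 ≤ x → x ≤ X → x ≤ rb * (d + x) := by
    intro d x hd hx hxX
    rw [hrdef, div_mul_eq_mul_div, le_div_iff₀ (by linarith : (0:ℝ) < δmin + X)]
    nlinarith
  have keyM : ∀ (d x M : ℝ), δmin ≤ d → 0 ≤ x → x ≤ X → 1 ≤ M → M ≤ B →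
      d + M * x ≤ M ^ c₀ * (d + x) := by
    intro d x M hd hx hxX hM1 hMB
    exact keyM' hr0 hr1 hB1 hcdef (hxrb d x hd hx hxX) (by linarith) hM1 hMB
  have keym : ∀ (d x m : ℝ), δmin ≤ d → 0 ≤ x → x ≤ X → 0 < m → m ≤ 1 →
      m ^ c₀ * (d + x) ≤ d + m * x := by
    intro d x m hd hx hxX hm0 hm1
    have hdx : (0:ℝ) < d + x := by linarith
    exact keym' hc00 hc01.le
      (le_trans (hxrb d x hd hx hxX) (mul_le_mul_of_nonneg_right hrc hdx.le)) hdx hm0 hm1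
  
  -- Tkn/Tk comparison bounds
  have TknM : ∀ (u v : Fin K → ℝ) (M : ℝ), (∀ j, 0 ≤ v j) → (∑ j, v j ≤ S) →
      1 ≤ M → M ≤ B → (∀ j, u j ≤ M * v j) → ∀ nn kk,
      Tkn g δsq nn kk u ≤ M ^ c₀ * Tkn g δsq nn kk v := by
    intro u v M hv hvS hM1 hMB huv nn kk
    have h2 : Tkn g δsq nn kk (fun j => M * v j)
        = (δsq nn + M * ∑ j ∈ Finset.univ.erase kk, g nn j * v j) / g nn kk := by
      unfold Tkn
      rw [Finset.mul_sum]
      congr 2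
      exact Finset.sum_congr rfl fun j _ => by ring
    calc Tkn g δsq nn kk u ≤ Tkn g δsq nn kk (fun j => M * v j) := Tkn_mono' hg huv
      _ = (δsq nn + M * ∑ j ∈ Finset.univ.erase kk, g nn j * v j) / g nn kk := h2
      _ ≤ M ^ c₀ * Tkn g δsq nn kk v := by
          unfold Tkn
          rw [mul_div_assoc', div_le_div_iff_of_pos_right (hg nn kk)]
          exact keyM _ _ _ (hδmin nn) (hI0 v hv nn kk) (hIb v hv hvS nn kk) hM1 hMB
  have Tknm : ∀ (u v : Fin K → ℝ) (m : ℝ), (∀ j, 0 ≤ v j) → (∑ j, v j ≤ S) →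
      0 < m → m ≤ 1 → (∀ j, m * v j ≤ u j) → ∀ nn kk,
      m ^ c₀ * Tkn g δsq nn kk v ≤ Tkn g δsq nn kk u := by
    intro u v m hv hvS hm0 hm1 huv nn kk
    have h2 : Tkn g δsq nn kk (fun j => m * v j)
        = (δsq nn + m * ∑ j ∈ Finset.univ.erase kk, g nn j * v j) / g nn kk := by
      unfold Tkn
      rw [Finset.mul_sum]
      congr 2
      exact Finset.sum_congr rfl fun j _ => by ring
    calc m ^ c₀ * Tkn g δsq nn kk v
        ≤ (δsq nn + m * ∑ j ∈ Finset.univ.erase kk, g nn j * v j) / g nn kk := by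
          unfold Tkn
          rw [mul_div_assoc', div_le_div_iff_of_pos_right (hg nn kk)]
          exact keym _ _ _ (hδmin nn) (hI0 v hv nn kk) (hIb v hv hvS nn kk) hm0 hm1
      _ = Tkn g δsq nn kk (fun j => m * v j) := h2.symm
      _ ≤ Tkn g δsq nn kk u := Tkn_mono' hg huv
  have TkM : ∀ (u v : Fin K → ℝ) (M : ℝ), (∀ j, 0 ≤ v j) → (∑ j, v j ≤ S) →
      1 ≤ M → M ≤ B → (∀ j, u j ≤ M * v j) → ∀ kk,
      Tk g δsq kk u ≤ M ^ c₀ * Tk g δsq kk v := by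
    intro u v M hv hvS hM1 hMB huv kk
    obtain ⟨nn, hnn⟩ := exists_Tk_eq' (g := g) (δsq := δsq) (k := kk) (p := v)
    rw [hnn]
    exact le_trans Tk_le_Tkn' (TknM u v M hv hvS hM1 hMB huv nn kk)
  have Tkm : ∀ (u v : Fin K → ℝ) (m : ℝ), (∀ j, 0 ≤ v j) → (∑ j, v j ≤ S) →
      0 < m → m ≤ 1 → (∀ j, m * v j ≤ u j) → ∀ kk,
      m ^ c₀ * Tk g δsq kk v ≤ Tk g δsq kk u := by
    intro u v m hv hvS hm0 hm1 huv kk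
    refine le_Tk' fun nn => le_trans ?_ (Tknm u v m hv hvS hm0 hm1 huv nn kk)
    exact mul_le_mul_of_nonneg_left Tk_le_Tkn' (Real.rpow_nonneg hm0.le _)
  -- iteration facts
  have hpos : ∀ t k, 0 < p t k := by
    intro t
    induction t with
    | zero => exact hp0
    | succ t ih =>
      intro k
      rw [hiter t]
      exact div_pos (mul_pos hS (Tk_pos' hg hδ (fun j => (ih j).le)))
        (Finset.sum_pos (fun j _ => Tk_pos' hg hδ (fun i => (ih i).le)) Finset.univ_nonempty)
  have hTpos : ∀ t, 0 < ∑ j, Tk g δsq j (p t) :=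
    fun t => Finset.sum_pos (fun j _ => Tk_pos' hg hδ (fun i => (hpos t i).le))
      Finset.univ_nonempty
  have hsum1 : ∀ t, ∑ k, p (t+1) k = S := by
    intro t
    rw [hiter t]
    rw [← Finset.sum_div, ← Finset.mul_sum]
    exact mul_div_cancel_right₀ S (ne_of_gt (hTpos t))
  have hpleS : ∀ t k, p (t+1) k ≤ S := by
    intro t k
    calc p (t+1) k ≤ ∑ j, p (t+1) j :=
          Finset.single_le_sum (fun j _ => (hpos (t+1) j).le) (Finset.mem_univ k)
      _ = S := hsum1 t
  have hTk_lb : ∀ (v : Fin K → ℝ), (∀ j, 0 ≤ v j) → ∀ kk, τ ≤ Tk g δsq kk v := by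
    intro v hv kk
    refine le_Tk' fun nn => ?_
    rw [hτdef]
    unfold Tkn
    exact div_le_div₀ (add_pos_of_pos_of_nonneg (hδ nn) (hI0 v hv nn kk)).le
      (le_add_of_le_of_nonneg (hδmin nn) (hI0 v hv nn kk)) (hg nn kk) (hGmax nn kk)
  have hTk_ub : ∀ (v : Fin K → ℝ), (∀ j, 0 ≤ v j) → (∑ j, v j ≤ S) → ∀ kk,
      Tk g δsq kk v ≤ Θ := by
    intro v hv hvS kk
    refine le_trans (Tk_le_Tkn' (n := Classical.arbitrary (Fin N))) ?_
    rw [hΘdef]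
    unfold Tkn
    exact div_le_div₀ (by linarith)
      (add_le_add (hδmax _) (hIb v hv hvS _ kk)) hgmin0 (hgmin _ kk)
  have hεlb : ∀ t k, 1 ≤ t → ε ≤ p (t+1) k := by
    intro t k ht
    rw [hiter t]
    have hv : ∀ j, 0 ≤ p t j := fun j => (hpos t j).le
    have hvS : ∑ j, p t j ≤ S := by
      obtain ⟨s, rfl⟩ : ∃ s, t = s + 1 := ⟨t-1, by omega⟩
      rw [hsum1 s]
    have h2 : ∑ j, Tk g δsq j (p t) ≤ K * Θ := by
      calc ∑ j, Tk g δsq j (p t) ≤ ∑ _j : Fin K, Θ :=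
            Finset.sum_le_sum fun j _ => hTk_ub _ hv hvS j
        _ = K * Θ := by simp [Finset.sum_const, Finset.card_univ, nsmul_eq_mul]
    calc ε ≤ S * τ / (K * Θ) := min_le_left _ _
      _ ≤ S * Tk g δsq k (p t) / ∑ j, Tk g δsq j (p t) :=
          div_le_div₀ (mul_nonneg hS.le (Tk_pos' hg hδ hv).le)
            (mul_le_mul_of_nonneg_left (hTk_lb _ hv k) hS.le) (hTpos t) h2
  
  -- ratio quantities
  set Mf : ℕ → ℝ := fun t => Finset.univ.sup' Finset.univ_nonempty
    (fun k => p (t+1) k / p t k) with hMfdef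
  set Mb : ℕ → ℝ := fun t => Finset.univ.sup' Finset.univ_nonempty
    (fun k => p t k / p (t+1) k) with hMbdef
  set β : ℕ → ℝ := fun t => Mf t * Mb t with hβdef
  have hMf_ratio : ∀ t k, p (t+1) k ≤ Mf t * p t k := by
    intro t k
    have := Finset.le_sup' (fun k => p (t+1) k / p t k) (Finset.mem_univ k)
    rw [hMfdef]
    exact (div_le_iff₀ (hpos t k)).mp this
  have hMb_ratio : ∀ t k, p t k ≤ Mb t * p (t+1) k := by
    intro t k
    have := Finset.le_sup' (fun k => p t k / p (t+1) k) (Finset.mem_univ k)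
    rw [hMbdef]
    exact (div_le_iff₀ (hpos (t+1) k)).mp this
  have hsum_eq : ∀ t, 1 ≤ t → ∑ k, p t k = S := by
    intro t ht
    obtain ⟨s, rfl⟩ : ∃ s, t = s + 1 := ⟨t-1, by omega⟩
    exact hsum1 s
  have hMf1 : ∀ t, 1 ≤ t → 1 ≤ Mf t := by
    intro t ht
    have hex : ∃ k, p t k ≤ p (t+1) k := by
      by_contra hcon
      push_neg at hcon
      have := Finset.sum_lt_sum_of_nonempty Finset.univ_nonempty
        (fun k _ => hcon k)
      rw [hsum1 t, hsum_eq t ht] at this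
      exact lt_irrefl S this
    obtain ⟨k, hk⟩ := hex
    rw [hMfdef]
    simp only []
    calc (1:ℝ) ≤ p (t+1) k / p t k := (one_le_div (hpos t k)).mpr hk
      _ ≤ _ := Finset.le_sup' (fun k => p (t+1) k / p t k) (Finset.mem_univ k)
  have hMb1 : ∀ t, 1 ≤ t → 1 ≤ Mb t := by
    intro t ht
    have hex : ∃ k, p (t+1) k ≤ p t k := by
      by_contra hcon
      push_neg at hcon
      have := Finset.sum_lt_sum_of_nonempty Finset.univ_nonempty
        (fun k _ => hcon k)
      rw [hsum1 t, hsum_eq t ht] at this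
      exact lt_irrefl S this
    obtain ⟨k, hk⟩ := hex
    rw [hMbdef]
    simp only []
    calc (1:ℝ) ≤ p t k / p (t+1) k := (one_le_div (hpos (t+1) k)).mpr hk
      _ ≤ _ := Finset.le_sup' (fun k => p t k / p (t+1) k) (Finset.mem_univ k)
  have hMfB : ∀ t, 2 ≤ t → Mf t ≤ B := by
    intro t ht
    refine Finset.sup'_le _ _ fun k _ => ?_
    rw [hBdef]
    refine div_le_div₀ hS.le (hpleS t k) hε0 ?_
    obtain ⟨s, rfl⟩ : ∃ s, t = s + 1 := ⟨t-1, by omega⟩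
    exact hεlb s k (by omega)
  have hMbB : ∀ t, 1 ≤ t → Mb t ≤ B := by
    intro t ht
    refine Finset.sup'_le _ _ fun k _ => ?_
    rw [hBdef]
    refine div_le_div₀ hS.le ?_ hε0 (hεlb t k ht)
    obtain ⟨s, rfl⟩ : ∃ s, t = s + 1 := ⟨t-1, by omega⟩
    exact hpleS s k
  -- the contraction step
  have hstep : ∀ t, 2 ≤ t → β (t+1) ≤ β t ^ c₀ := by
    intro t ht
    have hv : ∀ j, 0 ≤ p t j := fun j => (hpos t j).le
    have hu : ∀ j, 0 ≤ p (t+1) j := fun j => (hpos (t+1) j).le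
    have hvS : ∑ j, p t j ≤ S := le_of_eq (hsum_eq t (by omega))
    have huS : ∑ j, p (t+1) j ≤ S := le_of_eq (hsum1 t)
    have hTM : ∀ kk, Tk g δsq kk (p (t+1)) ≤ (Mf t) ^ c₀ * Tk g δsq kk (p t) :=
      TkM _ _ _ hv hvS (hMf1 t (by omega)) (hMfB t ht) (hMf_ratio t)
    have hTm : ∀ kk, Tk g δsq kk (p t) ≤ (Mb t) ^ c₀ * Tk g δsq kk (p (t+1)) :=
      TkM _ _ _ hu huS (hMb1 t (by omega)) (hMbB t (by omega)) (hMb_ratio t)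
    set D1 := ∑ j, Tk g δsq j (p t) with hD1def
    set D2 := ∑ j, Tk g δsq j (p (t+1)) with hD2def
    have hD1 : 0 < D1 := hTpos t
    have hD2 : 0 < D2 := hTpos (t+1)
    have hMfc0 : (0:ℝ) ≤ (Mf t) ^ c₀ := Real.rpow_nonneg (by linarith only [hMf1 t (by omega : 1 ≤ t)]) _
    have hMbc0 : (0:ℝ) ≤ (Mb t) ^ c₀ := Real.rpow_nonneg (by linarith only [hMb1 t (by omega : 1 ≤ t)]) _
    have hDM : D2 ≤ (Mf t) ^ c₀ * D1 := by
      rw [hD1def, hD2def, Finset.mul_sum]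
      exact Finset.sum_le_sum fun j _ => hTM j
    have hDm : D1 ≤ (Mb t) ^ c₀ * D2 := by
      rw [hD1def, hD2def, Finset.mul_sum]
      exact Finset.sum_le_sum fun j _ => hTm j
    have hr1 : ∀ k, p (t+2) k / p (t+1) k ≤ (Mf t) ^ c₀ * D1 / D2 := by
      intro k
      rw [div_le_div_iff₀ (hpos (t+1) k) hD2]
      have e2 : p (t+2) k * D2 = S * Tk g δsq k (p (t+1)) := by
        rw [hiter (t+1)]
        exact div_mul_cancel₀ _ (ne_of_gt hD2)
      have e1 : p (t+1) k * D1 = S * Tk g δsq k (p t) := by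
        rw [hiter t]
        exact div_mul_cancel₀ _ (ne_of_gt hD1)
      calc p (t+2) k * D2 = S * Tk g δsq k (p (t+1)) := e2
        _ ≤ S * ((Mf t) ^ c₀ * Tk g δsq k (p t)) :=
            mul_le_mul_of_nonneg_left (hTM k) hS.le
        _ = (Mf t) ^ c₀ * (p (t+1) k * D1) := by rw [e1]; ring
        _ = (Mf t) ^ c₀ * D1 * p (t+1) k := by ring
    have hr2 : ∀ k, p (t+1) k / p (t+2) k ≤ (Mb t) ^ c₀ * D2 / D1 := by
      intro k
      rw [div_le_div_iff₀ (hpos (t+2) k) hD1]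
      have e2 : p (t+2) k * D2 = S * Tk g δsq k (p (t+1)) := by
        rw [hiter (t+1)]
        exact div_mul_cancel₀ _ (ne_of_gt hD2)
      have e1 : p (t+1) k * D1 = S * Tk g δsq k (p t) := by
        rw [hiter t]
        exact div_mul_cancel₀ _ (ne_of_gt hD1)
      calc p (t+1) k * D1 = S * Tk g δsq k (p t) := e1
        _ ≤ S * ((Mb t) ^ c₀ * Tk g δsq k (p (t+1))) :=
            mul_le_mul_of_nonneg_left (hTm k) hS.le
        _ = (Mb t) ^ c₀ * (p (t+2) k * D2) := by rw [e2]; ring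
        _ = (Mb t) ^ c₀ * D2 * p (t+2) k := by ring
    have hMf' : Mf (t+1) ≤ (Mf t) ^ c₀ * D1 / D2 := by
      rw [hMfdef]
      exact Finset.sup'_le _ _ fun k _ => hr1 k
    have hMb' : Mb (t+1) ≤ (Mb t) ^ c₀ * D2 / D1 := by
      rw [hMbdef]
      exact Finset.sup'_le _ _ fun k _ => hr2 k
    have hMf'0 : 0 ≤ Mb (t+1) := by linarith only [hMb1 (t+1) (by omega : 1 ≤ t+1)]
    calc β (t+1) = Mf (t+1) * Mb (t+1) := by rw [hβdef]
      _ ≤ ((Mf t) ^ c₀ * D1 / D2) * ((Mb t) ^ c₀ * D2 / D1) := by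
          apply mul_le_mul hMf' hMb' hMf'0
          positivity
      _ = (Mf t) ^ c₀ * (Mb t) ^ c₀ := by
          field_simp
      _ = β t ^ c₀ := by
          rw [hβdef]
          exact (Real.mul_rpow (by linarith only [hMf1 t (by omega : 1 ≤ t)])
            (by linarith only [hMb1 t (by omega : 1 ≤ t)])).symm
  
  -- geometric decay of β
  have hβ1 : ∀ t, 1 ≤ t → 1 ≤ β t := by
    intro t ht
    rw [hβdef]
    simp only []
    nlinarith only [hMf1 t ht, hMb1 t ht]
  set L : ℝ := Real.log (β 2) with hLdef
  have hL0 : 0 ≤ L := Real.log_nonneg (hβ1 2 (by omega))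
  have hβdecay : ∀ s, β (s+2) ≤ Real.exp (c₀ ^ s * L) := by
    intro s
    induction s with
    | zero =>
      rw [pow_zero, one_mul, hLdef, Real.exp_log (by linarith only [hβ1 2 (by omega : 1 ≤ 2)])]
    | succ s ih =>
      calc β (s+1+2) = β ((s+2)+1) := by ring_nf
        _ ≤ β (s+2) ^ c₀ := hstep (s+2) (by omega)
        _ ≤ (Real.exp (c₀ ^ s * L)) ^ c₀ :=
            Real.rpow_le_rpow (by linarith only [hβ1 (s+2) (by omega : 1 ≤ s+2)]) ih hc00
        _ = Real.exp (c₀ ^ (s+1) * L) := by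
            rw [← Real.exp_mul]
            congr 1
            ring
  -- geometric increments
  have hdist : ∀ s k, dist (p (s+2) k) (p (s+3) k) ≤ (S * (L * Real.exp L)) * c₀ ^ s := by
    intro s k
    have hβt := hβdecay s
    have hy0 : 0 ≤ c₀ ^ s * L := by positivity
    have hyL : c₀ ^ s * L ≤ L :=
      mul_le_of_le_one_left hL0 (pow_le_one₀ hc00 hc01.le)
    have hexp : Real.exp (c₀ ^ s * L) - 1 ≤ (c₀ ^ s * L) * Real.exp L := by
      have h1 := Real.add_one_le_exp (-(c₀ ^ s * L))
      rw [Real.exp_neg] at h1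
      have h2 := Real.exp_pos (c₀ ^ s * L)
      have h3 : Real.exp (c₀ ^ s * L) ≤ Real.exp L := Real.exp_le_exp.mpr hyL
      have h4 : (1 - c₀ ^ s * L) * Real.exp (c₀ ^ s * L) ≤ 1 := by
        have h5 := mul_le_mul_of_nonneg_right h1 h2.le
        rw [inv_mul_cancel₀ (ne_of_gt h2)] at h5
        nlinarith only [h5, h2]
      have h6 : (c₀ ^ s * L) * Real.exp (c₀ ^ s * L) ≤ (c₀ ^ s * L) * Real.exp L :=
        mul_le_mul_of_nonneg_left h3 hy0
      linarith only [h4, h6]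
    have hβub : β (s+2) - 1 ≤ (S * (L * Real.exp L)) / S * c₀ ^ s := by
      have : β (s+2) - 1 ≤ (c₀ ^ s * L) * Real.exp L := by linarith only [hβt, hexp]
      calc β (s+2) - 1 ≤ (c₀ ^ s * L) * Real.exp L := this
        _ = (S * (L * Real.exp L)) / S * c₀ ^ s := by
            rw [mul_comm S (L * Real.exp L), mul_div_assoc, div_self (ne_of_gt hS), mul_one]
            ring
    have hβ1' : 1 ≤ β (s+2) := hβ1 (s+2) (by omega)
    have hMfβ : Mf (s+2) ≤ β (s+2) := by
      rw [hβdef]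
      simp only []
      nlinarith only [hMf1 (s+2) (by omega : 1 ≤ s+2), hMb1 (s+2) (by omega : 1 ≤ s+2)]
    have hMbβ : Mb (s+2) ≤ β (s+2) := by
      rw [hβdef]
      simp only []
      nlinarith only [hMf1 (s+2) (by omega : 1 ≤ s+2), hMb1 (s+2) (by omega : 1 ≤ s+2)]
    have hup : p (s+3) k - p (s+2) k ≤ S * (β (s+2) - 1) := by
      have h1 : p (s+3) k ≤ Mf (s+2) * p (s+2) k := hMf_ratio (s+2) k
      have h2 : p (s+2) k ≤ S := hpleS (s+1) k
      have h3 : (Mf (s+2) - 1) * p (s+2) k ≤ (β (s+2) - 1) * S :=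
        mul_le_mul (by linarith only [hMfβ]) h2 (hpos _ k).le (by linarith only [hβ1'])
      nlinarith only [h1, h3]
    have hdown : p (s+2) k - p (s+3) k ≤ S * (β (s+2) - 1) := by
      have h1 : p (s+2) k ≤ Mb (s+2) * p (s+3) k := hMb_ratio (s+2) k
      have h2 : p (s+3) k ≤ S := hpleS (s+2) k
      have h3 : (Mb (s+2) - 1) * p (s+3) k ≤ (β (s+2) - 1) * S :=
        mul_le_mul (by linarith only [hMbβ]) h2 (hpos _ k).le (by linarith only [hβ1'])
      nlinarith only [h1, h3]
    rw [Real.dist_eq, abs_le]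
    constructor
    · have := hβub
      have h5 : S * (β (s+2) - 1) ≤ S * ((S * (L * Real.exp L)) / S * c₀ ^ s) :=
        mul_le_mul_of_nonneg_left hβub hS.le
      have h6 : S * ((S * (L * Real.exp L)) / S * c₀ ^ s) = (S * (L * Real.exp L)) * c₀ ^ s := by
        rw [mul_comm S (L * Real.exp L), mul_div_assoc, div_self (ne_of_gt hS), mul_one]
        ring
      linarith only [hup, h5, h6]
    · have h5 : S * (β (s+2) - 1) ≤ S * ((S * (L * Real.exp L)) / S * c₀ ^ s) :=
        mul_le_mul_of_nonneg_left hβub hS.le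
      have h6 : S * ((S * (L * Real.exp L)) / S * c₀ ^ s) = (S * (L * Real.exp L)) * c₀ ^ s := by
        rw [mul_comm S (L * Real.exp L), mul_div_assoc, div_self (ne_of_gt hS), mul_one]
        ring
      linarith only [hdown, h5, h6]
  -- convergence
  have hconv : ∀ k, ∃ x, Tendsto (fun s => p (s+2) k) atTop (𝓝 x) := by
    intro k
    have hcauchy : CauchySeq (fun s => p (s+2) k) :=
      cauchySeq_of_le_geometric c₀ (S * (L * Real.exp L)) hc01 (fun s => hdist s k)
    exact cauchySeq_tendsto_of_complete hcauchy
  choose pstar htend using hconv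
  have hps_lb : ∀ k, ε ≤ pstar k := fun k =>
    ge_of_tendsto (htend k) (Eventually.of_forall fun s => hεlb (s+1) k (by omega))
  have hps_ub : ∀ k, pstar k ≤ S := fun k =>
    le_of_tendsto (htend k) (Eventually.of_forall fun s => hpleS (s+1) k)
  have hps_pos : ∀ k, 0 < pstar k := fun k => lt_of_lt_of_le hε0 (hps_lb k)
  have hps_sum : ∑ k, pstar k = S := by
    have h1 : Tendsto (fun s => ∑ k, p (s+2) k) atTop (𝓝 (∑ k, pstar k)) :=
      tendsto_finset_sum _ (fun k _ => htend k)
    have h2 : (fun s => ∑ k, p (s+2) k) = fun _ => S := funext fun s => hsum1 (s+1)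
    rw [h2] at h1
    exact (tendsto_nhds_unique tendsto_const_nhds h1).symm
  have hTkn_tend : ∀ nn kk, Tendsto (fun s => Tkn g δsq nn kk (p (s+2))) atTop
      (𝓝 (Tkn g δsq nn kk pstar)) := by
    intro nn kk
    unfold Tkn
    apply Tendsto.div_const
    exact Tendsto.const_add _ (tendsto_finset_sum _ fun j _ => (htend j).const_mul _)
  have hTk_tend : ∀ kk, Tendsto (fun s => Tk g δsq kk (p (s+2))) atTop
      (𝓝 (Tk g δsq kk pstar)) := fun kk => tendsto_Tk' (fun nn => hTkn_tend nn kk)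
  have hDpos : 0 < ∑ j, Tk g δsq j pstar :=
    Finset.sum_pos (fun j _ => Tk_pos' hg hδ fun i => (hps_pos i).le) Finset.univ_nonempty
  have hfix : ∀ k, pstar k = S * Tk g δsq k pstar / ∑ j, Tk g δsq j pstar := by
    intro k
    have h1 : Tendsto (fun s => p (s+3) k) atTop (𝓝 (pstar k)) :=
      (htend k).comp (tendsto_add_atTop_nat 1)
    have h2 : Tendsto (fun s => S * Tk g δsq k (p (s+2)) / ∑ j, Tk g δsq j (p (s+2)))
        atTop (𝓝 (S * Tk g δsq k pstar / ∑ j, Tk g δsq j pstar)) :=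
      Tendsto.div ((hTk_tend k).const_mul S)
        (tendsto_finset_sum _ fun j _ => hTk_tend j) (ne_of_gt hDpos)
    have h3 : (fun s => p (s+3) k)
        = fun s => S * Tk g δsq k (p (s+2)) / ∑ j, Tk g δsq j (p (s+2)) := funext fun s => by
      show p ((s+2)+1) k = _
      rw [hiter (s+2)]
    rw [h3] at h1
    exact tendsto_nhds_unique h1 h2
  set γ : ℝ := S / ∑ j, Tk g δsq j pstar with hγdef
  have hγ0 : 0 < γ := div_pos hS hDpos
  have hratio : ∀ k, pstar k = γ * Tk g δsq k pstar := fun k => by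
    rw [hfix k, hγdef]; ring
  
  -- upper bound for any feasible point
  have hub : ∀ (q : Fin K → ℝ) (b : Fin K → Fin N), (∀ j, 0 ≤ q j) → (∑ j, q j ≤ S) →
      (⨅ k, SINRul g δsq q b k) ≤ γ := by
    intro q b hq0 hqS
    by_contra hcon
    push_neg at hcon
    set γ' := ⨅ k, SINRul g δsq q b k with hγ'def
    have hγ'0 : 0 < γ' := lt_trans hγ0 hcon
    have hSINR : ∀ k, γ' ≤ SINRul g δsq q b k := fun k =>
      ciInf_le (Set.finite_range _).bddBelow k
    have hq_lb : ∀ k, γ' * Tk g δsq k q ≤ q k := by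
      intro k
      have h1 := hSINR k
      rw [SINRul_eq_div_Tkn] at h1
      have h2 : 0 < Tkn g δsq (b k) k q := Tkn_pos' hg hδ hq0
      have h3 : γ' * Tkn g δsq (b k) k q ≤ q k := (le_div_iff₀ h2).mp h1
      have h4 : Tk g δsq k q ≤ Tkn g δsq (b k) k q := Tk_le_Tkn'
      have h5 : γ' * Tk g δsq k q ≤ γ' * Tkn g δsq (b k) k q :=
        mul_le_mul_of_nonneg_left h4 hγ'0.le
      linarith only [h3, h5]
    have hqpos : ∀ k, 0 < q k := fun k =>
      lt_of_lt_of_le (mul_pos hγ'0 (Tk_pos' hg hδ hq0)) (hq_lb k)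
    set μ := Finset.univ.sup' Finset.univ_nonempty (fun k => pstar k / q k) with hμdef
    obtain ⟨kh, _, hkh⟩ := Finset.exists_mem_eq_sup' Finset.univ_nonempty
      (fun k => pstar k / q k)
    have hμk : μ = pstar kh / q kh := by rw [hμdef]; exact hkh
    have hμ1 : 1 ≤ μ := by
      have hex : ∃ k, q k ≤ pstar k := by
        by_contra hcon2
        push_neg at hcon2
        have hlt := Finset.sum_lt_sum_of_nonempty Finset.univ_nonempty
          (fun k (_ : k ∈ Finset.univ) => hcon2 k)
        rw [hps_sum] at hlt
        linarith only [hlt, hqS]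
      obtain ⟨k, hk⟩ := hex
      calc (1:ℝ) ≤ pstar k / q k := (one_le_div (hqpos k)).mpr hk
        _ ≤ μ := by rw [hμdef]; exact Finset.le_sup' (fun k => pstar k / q k) (Finset.mem_univ k)
    have hμle : ∀ j, pstar j ≤ μ * q j := by
      intro j
      have h6 := Finset.le_sup' (fun k => pstar k / q k) (Finset.mem_univ j)
      rw [← hμdef] at h6
      exact (div_le_iff₀ (hqpos j)).mp h6
    have hTmono : Tk g δsq kh pstar ≤ Tk g δsq kh (fun j => μ * q j) := Tk_mono' hg hμle
    have hTsc : Tk g δsq kh (fun j => μ * q j) ≤ μ * Tk g δsq kh q := Tk_smul_le' hg hδ hμ1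
    have heq : pstar kh = μ * q kh := by
      rw [hμk]
      exact (div_mul_cancel₀ _ (ne_of_gt (hqpos kh))).symm
    have hchain : μ * q kh ≤ γ * (μ * Tk g δsq kh q) := by
      calc μ * q kh = pstar kh := heq.symm
        _ = γ * Tk g δsq kh pstar := hratio kh
        _ ≤ γ * (μ * Tk g δsq kh q) :=
            mul_le_mul_of_nonneg_left (le_trans hTmono hTsc) hγ0.le
    have hμ0 : (0:ℝ) < μ := by linarith only [hμ1]
    have hfin : q kh ≤ γ * Tk g δsq kh q := by
      have h7 : μ * q kh ≤ μ * (γ * Tk g δsq kh q) := by nlinarith only [hchain]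
      exact le_of_mul_le_mul_left h7 hμ0
    have hcontr : q kh < q kh :=
      calc q kh ≤ γ * Tk g δsq kh q := hfin
        _ < γ' * Tk g δsq kh q := mul_lt_mul_of_pos_right hcon (Tk_pos' hg hδ hq0)
        _ ≤ q kh := hq_lb kh
    exact lt_irrefl _ hcontr
  -- achievability for compatible associations
  have hps0 : ∀ j, 0 ≤ pstar j := fun j => (hps_pos j).le
  have hach : ∀ (b : Fin K → Fin N), (∀ k, Tkn g δsq (b k) k pstar = Tk g δsq k pstar) →
      (⨅ k, SINRul g δsq pstar b k) = γ := by
    intro b hb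
    have h1 : ∀ k, SINRul g δsq pstar b k = γ := by
      intro k
      rw [SINRul_eq_div_Tkn, hb k, hratio k, mul_div_assoc,
        div_self (ne_of_gt (Tk_pos' hg hδ hps0)), mul_one]
    calc (⨅ k, SINRul g δsq pstar b k) = ⨅ _k : Fin K, γ := by simp only [h1]
      _ = γ := ciInf_const
  -- optimality of compatible associations
  have hopt : ∀ (b : Fin K → Fin N), (∀ k, Tkn g δsq (b k) k pstar = Tk g δsq k pstar) →
      IsOptimalAssoc g δsq S b := by
    intro b hb
    unfold IsOptimalAssoc valULsum
    have hmemA : γ ∈ {γ' | ∃ q : Fin K → ℝ,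
        (∀ k, 0 ≤ q k) ∧ (∑ k, q k ≤ S) ∧ γ' = ⨅ k, SINRul g δsq q b k} :=
      ⟨pstar, hps0, le_of_eq hps_sum, (hach b hb).symm⟩
    have hubA : γ ∈ upperBounds {γ' | ∃ q : Fin K → ℝ,
        (∀ k, 0 ≤ q k) ∧ (∑ k, q k ≤ S) ∧ γ' = ⨅ k, SINRul g δsq q b k} := by
      rintro γ' ⟨q, hq0, hqS, rfl⟩
      exact hub q b hq0 hqS
    have hmemAll : γ ∈ {γ' | ∃ (q : Fin K → ℝ) (b' : Fin K → Fin N),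
        (∀ k, 0 ≤ q k) ∧ (∑ k, q k ≤ S) ∧ γ' = ⨅ k, SINRul g δsq q b' k} :=
      ⟨pstar, b, hps0, le_of_eq hps_sum, (hach b hb).symm⟩
    have hubAll : γ ∈ upperBounds {γ' | ∃ (q : Fin K → ℝ) (b' : Fin K → Fin N),
        (∀ k, 0 ≤ q k) ∧ (∑ k, q k ≤ S) ∧ γ' = ⨅ k, SINRul g δsq q b' k} := by
      rintro γ' ⟨q, b', hq0, hqS, rfl⟩
      exact hub q b' hq0 hqS
    rw [IsGreatest.csSup_eq ⟨hmemA, hubA⟩, IsGreatest.csSup_eq ⟨hmemAll, hubAll⟩]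
  -- eventually the greedy association is compatible with pstar
  have hev : ∀ k, ∀ᶠ s in atTop, Tkn g δsq (a (s+2) k) k pstar = Tk g δsq k pstar := by
    intro k
    obtain ⟨m, hm⟩ := exists_Tk_eq' (g := g) (δsq := δsq) (k := k) (p := pstar)
    have hev_n : ∀ n : Fin N, ∀ᶠ s in atTop,
        (Tkn g δsq n k pstar ≠ Tk g δsq k pstar) →
        Tkn g δsq m k (p (s+2)) < Tkn g δsq n k (p (s+2)) := by
      intro n
      by_cases hA : Tkn g δsq n k pstar = Tk g δsq k pstar
      · exact Eventually.of_forall fun s h => absurd hA h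
      · have hgt : 0 < Tkn g δsq n k pstar - Tkn g δsq m k pstar := by
          have h1 : Tk g δsq k pstar ≤ Tkn g δsq n k pstar := Tk_le_Tkn'
          have h2 : Tk g δsq k pstar ≠ Tkn g δsq n k pstar := fun h => hA h.symm
          have h3 := lt_of_le_of_ne h1 h2
          rw [hm] at h3
          linarith only [h3]
        have htendd : Tendsto (fun s => Tkn g δsq n k (p (s+2)) - Tkn g δsq m k (p (s+2)))
            atTop (𝓝 (Tkn g δsq n k pstar - Tkn g δsq m k pstar)) :=
          (hTkn_tend n k).sub (hTkn_tend m k)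
        have hev2 := htendd.eventually (eventually_gt_nhds hgt)
        filter_upwards [hev2] with s hs _
        linarith only [hs]
    have hall := (Filter.eventually_all).mpr hev_n
    filter_upwards [hall] with s hs
    by_contra hne
    have h1 := hs (a (s+2) k) hne
    have h2 := ha (s+2) k m
    linarith only [h1, h2]
  have hevall : ∀ᶠ s in atTop, ∀ k, Tkn g δsq (a (s+2) k) k pstar = Tk g δsq k pstar :=
    (Filter.eventually_all).mpr hev
  obtain ⟨s₀, hs₀⟩ := Filter.eventually_atTop.mp hevall
  refine ⟨s₀ + 2, fun t ht => ?_⟩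
  obtain ⟨s, hs, rfl⟩ : ∃ s, s₀ ≤ s ∧ t = s + 2 := ⟨t - 2, by omega, by omega⟩
  exact hopt (a (s+2)) (hs₀ s hs)
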